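/- arXiv:2007.09218 — 2 statements merged into one kernel-verified Lean document; each statement's English description precedes it below -/
import Mathlib

section
/- Let (H,R) be a quasitriangular bialgebra with a balance, i.e. an invertible central b ∈ H with ε(b)=1 and Δ(b) = (b⊗b)·R₂₁·R. Then H is almost cylindrical with twist pair (id, R₂₁⁻¹) and k = b, and all of H is cylindrically invariant. -/
noncomputable section
open TensorProduct

variable (F : Type*) [CommRing F] (H : Type*) [Ring H] [Bialgebra F H]

/-- The flip map on `H ⊗ H`. -/
def τ₂ : H ⊗[F] H ≃ₐ[F] H ⊗[F] H := Algebra.TensorProduct.comm F H H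

/-- Embedding of `H ⊗ H` into the first two factors of `(H ⊗ H) ⊗ H`. -/
def ι₁₂ : H ⊗[F] H →ₐ[F] (H ⊗[F] H) ⊗[F] H := Algebra.TensorProduct.includeLeft

/-- Embedding of `H ⊗ H` into the last two factors of `(H ⊗ H) ⊗ H`. -/
def ι₂₃ : H ⊗[F] H →ₐ[F] (H ⊗[F] H) ⊗[F] H :=
  Algebra.TensorProduct.map Algebra.TensorProduct.includeRight (AlgHom.id F H)

/-- Embedding of `H ⊗ H` into the outer factors of `(H ⊗ H) ⊗ H`. -/
def ι₁₃ : H ⊗[F] H →ₐ[F] (H ⊗[F] H) ⊗[F] H :=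
  Algebra.TensorProduct.map Algebra.TensorProduct.includeLeft (AlgHom.id F H)

/-- The image in `(H⊗H)ˣ` of a unit under the flip map. -/
def uflip (R : (H ⊗[F] H)ˣ) : (H ⊗[F] H)ˣ :=
  ⟨τ₂ F H ↑R, τ₂ F H ↑R⁻¹,
    by rw [← map_mul, Units.mul_inv, map_one],
    by rw [← map_mul, Units.inv_mul, map_one]⟩

/-- Conjugation by a unit, as an algebra automorphism. -/
def Ad {A : Type*} [Ring A] [Algebra F A] (u : Aˣ) : A ≃ₐ[F] A where
  toFun x := ↑u * x * ↑u⁻¹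
  invFun x := ↑u⁻¹ * x * ↑u
  left_inv x := by simp [mul_assoc]
  right_inv x := by simp [mul_assoc]
  map_mul' x y := by simp [mul_assoc]
  map_add' x y := by rw [mul_add, add_mul]
  commutes' r := by rw [← Algebra.commutes, mul_assoc, Units.mul_inv, mul_one]

/-- The unit `(g ⊗ g)` of `H ⊗ H` attached to a unit `g` of `H`. -/
def uTmul (g : Hˣ) : (H ⊗[F] H)ˣ :=
  ⟨(↑g : H) ⊗ₜ[F] (↑g : H), (↑g⁻¹ : H) ⊗ₜ[F] (↑g⁻¹ : H),
    by rw [Algebra.TensorProduct.tmul_mul_tmul, Units.mul_inv, ← Algebra.TensorProduct.one_def],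
    by rw [Algebra.TensorProduct.tmul_mul_tmul, Units.inv_mul, ← Algebra.TensorProduct.one_def]⟩

/-- The comultiplication of the bialgebra `H`. -/
def Δ : H →ₐ[F] H ⊗[F] H := Bialgebra.comulAlgHom F H

/-- The counit of the bialgebra `H`. -/
def ε : H →ₐ[F] F := Bialgebra.counitAlgHom F H

/-- The opposite comultiplication `Δ^op = flip ∘ Δ`. -/
def Δop : H →ₐ[F] H ⊗[F] H := (τ₂ F H).toAlgHom.comp (Δ F H)

/-- `(Δ ⊗ id)` as a map `H ⊗ H → (H ⊗ H) ⊗ H`. -/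
def Δ₁ : H ⊗[F] H →ₐ[F] (H ⊗[F] H) ⊗[F] H :=
  Algebra.TensorProduct.map (Δ F H) (AlgHom.id F H)

/-- `(id ⊗ Δ)`, reassociated into `(H ⊗ H) ⊗ H`. -/
def Δ₂ : H ⊗[F] H →ₐ[F] (H ⊗[F] H) ⊗[F] H :=
  ((Algebra.TensorProduct.assoc F F F H H H).symm.toAlgHom).comp
    (Algebra.TensorProduct.map (AlgHom.id F H) (Δ F H))

/-- Quasitriangularity of an invertible `R ∈ H ⊗ H` with respect to a coproduct `Δ'`:
`R Δ'(x) = Δ'^op(x) R`, `(Δ'⊗id)(R) = R₁₃R₂₃` and `(id⊗Δ')(R) = R₁₃R₁₂`. -/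
def IsQuasiTri (Δ' : H →ₐ[F] H ⊗[F] H) (R : (H ⊗[F] H)ˣ) : Prop :=
  (∀ x : H, (↑R : H ⊗[F] H) * Δ' x = τ₂ F H (Δ' x) * ↑R) ∧
  (Algebra.TensorProduct.map Δ' (AlgHom.id F H)) (↑R : H ⊗[F] H)
      = ι₁₃ F H ↑R * ι₂₃ F H ↑R ∧
  ((Algebra.TensorProduct.assoc F F F H H H).symm
      ((Algebra.TensorProduct.map (AlgHom.id F H) Δ') (↑R : H ⊗[F] H)))
      = ι₁₃ F H ↑R * ι₁₂ F H ↑R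

/-- The unit of `H ⊗ H` obtained by applying `Δ` to a unit of `H`. -/
def uComul (g : Hˣ) : (H ⊗[F] H)ˣ :=
  ⟨Δ F H ↑g, Δ F H ↑g⁻¹,
    by rw [← map_mul, Units.mul_inv, map_one],
    by rw [← map_mul, Units.inv_mul, map_one]⟩

/-- A Drinfeld twist: an invertible `J ∈ H ⊗ H` with `(ε⊗id)(J) = 1 = (id⊗ε)(J)`
satisfying the cocycle identity `(J⊗1)(Δ⊗id)(J) = (1⊗J)(id⊗Δ)(J)`. -/
def IsTwist (J : (H ⊗[F] H)ˣ) : Prop :=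
  (Algebra.TensorProduct.lid F H)
      ((Algebra.TensorProduct.map (ε F H) (AlgHom.id F H)) ↑J) = 1 ∧
  (Algebra.TensorProduct.rid F F H)
      ((Algebra.TensorProduct.map (AlgHom.id F H) (ε F H)) ↑J) = 1 ∧
  ι₁₂ F H ↑J * Δ₁ F H ↑J = ι₂₃ F H ↑J * Δ₂ F H ↑J

/-- A twist pair `(ψ, J)`: `Δ^{op,ψ} = Ad(J) ∘ Δ` and `(ψ⊗ψ)(R₂₁) = J₂₁ R J⁻¹`. -/
def TwistPair (R : (H ⊗[F] H)ˣ) (ψ : H ≃ₐ[F] H) (J : (H ⊗[F] H)ˣ) : Prop :=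
  (∀ x : H, (Algebra.TensorProduct.map ψ.toAlgHom ψ.toAlgHom)
      (τ₂ F H (Δ F H (ψ.symm x))) = ↑J * Δ F H x * ↑J⁻¹) ∧
  ((Algebra.TensorProduct.map ψ.toAlgHom ψ.toAlgHom) (τ₂ F H ↑R)
      = ↑(uflip F H J) * ↑R * ↑J⁻¹)

/-! The twist pair comes from flipping the intertwining relation `R Δ(x) = Δ^op(x) R`, which
gives `Δ^op(x) = R₂₁⁻¹ Δ(x) R₂₁`. For the k-matrix identity, split `b ⊗ b = (1 ⊗ b)(b ⊗ 1)`: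
both factors are central in `H ⊗ H`, so they can be moved around `R₂₁ R` freely. -/

section Central

variable {R A B : Type*} [CommSemiring R] [Semiring A] [Semiring B] [Algebra R A] [Algebra R B]

theorem commute_tmul_one_of_central {c : A} (hc : ∀ a : A, Commute c a) (x : A ⊗[R] B) :
    Commute (c ⊗ₜ[R] (1 : B)) x := by
  induction x using TensorProduct.induction_on with
  | zero => exact Commute.zero_right _
  | tmul a b => exact (hc a).tmul (Commute.one_left b)
  | add x y hx hy => exact hx.add_right hy

theorem commute_one_tmul_of_central {c : B} (hc : ∀ b : B, Commute c b) (x : A ⊗[R] B) :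
    Commute ((1 : A) ⊗ₜ[R] c) x := by
  induction x using TensorProduct.induction_on with
  | zero => exact Commute.zero_right _
  | tmul a b => exact (Commute.one_left a).tmul (hc b)
  | add x y hx hy => exact hx.add_right hy

end Central

theorem τ₂_τ₂ (x : H ⊗[F] H) : τ₂ F H (τ₂ F H x) = x := by
  simpa only [τ₂, Algebra.TensorProduct.comm_symm] using
    (Algebra.TensorProduct.comm F H H).symm_apply_apply x

@[simp]
theorem coe_uflip (u : (H ⊗[F] H)ˣ) : (uflip F H u : H ⊗[F] H) = τ₂ F H u := rfl

theorem uflip_inv (u : (H ⊗[F] H)ˣ) : uflip F H u⁻¹ = (uflip F H u)⁻¹ := rfl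

theorem uflip_uflip (u : (H ⊗[F] H)ˣ) : uflip F H (uflip F H u) = u :=
  Units.ext (τ₂_τ₂ F H u)

theorem twistPair_refl_uflip_inv (R : (H ⊗[F] H)ˣ)
    (hR : ∀ x : H, (R : H ⊗[F] H) * Δ F H x = τ₂ F H (Δ F H x) * R) :
    TwistPair F H R AlgEquiv.refl (uflip F H R)⁻¹ := by
  simp only [TwistPair, AlgEquiv.refl_toAlgHom, Algebra.TensorProduct.map_id, AlgHom.id_apply,
    AlgEquiv.refl_symm, AlgEquiv.coe_refl, id, inv_inv]
  refine ⟨fun x => ?_, by rw [← uflip_inv, uflip_uflip, Units.inv_mul, one_mul, coe_uflip]⟩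
  rw [mul_assoc, Units.eq_inv_mul_iff_mul_eq, coe_uflip]
  simpa only [map_mul, τ₂_τ₂] using congrArg (τ₂ F H) (hR x)

theorem comul_eq_of_balance {R : (H ⊗[F] H)ˣ} {b : Hˣ} (hcentral : ∀ x : H, ↑b * x = x * ↑b)
    (hcoprod : Δ F H ↑b = ((↑b : H) ⊗ₜ[F] (↑b : H)) * ↑(uflip F H R) * ↑R) :
    Δ F H ↑b = τ₂ F H R * ((1 : H) ⊗ₜ[F] (↑b : H)) * R * ((↑b : H) ⊗ₜ[F] (1 : H)) := by
  set c : H ⊗[F] H := (b : H) ⊗ₜ[F] 1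
  set d : H ⊗[F] H := 1 ⊗ₜ[F] (b : H)
  set T : H ⊗[F] H := τ₂ F H R
  set r : H ⊗[F] H := (R : H ⊗[F] H)
  have hc : ∀ x, Commute c x := commute_tmul_one_of_central hcentral
  have hd : ∀ x, Commute d x := commute_one_tmul_of_central hcentral
  have hsplit : (b : H) ⊗ₜ[F] (b : H) = d * c := by
    rw [Algebra.TensorProduct.tmul_mul_tmul, one_mul, mul_one]
  calc Δ F H b = d * c * T * r := by rw [hcoprod, hsplit, coe_uflip]
    _ = d * (T * r * c) := by rw [mul_assoc d c T, mul_assoc d, mul_assoc c, (hc (T * r)).eq]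
    _ = T * d * r * c := by rw [← (hd T).eq]; simp only [mul_assoc]

theorem balance_gives_almost_cylindrical (R : (H ⊗[F] H)ˣ) (b : Hˣ)
    (hR : IsQuasiTri F H (Δ F H) R)
    (hcentral : ∀ x : H, ↑b * x = x * ↑b)
    (hcoprod : Δ F H ↑b = ((↑b : H) ⊗ₜ[F] (↑b : H)) * ↑(uflip F H R) * ↑R) :
    TwistPair F H R (AlgEquiv.refl : H ≃ₐ[F] H) (uflip F H R)⁻¹ ∧
    (Δ F H ↑b
      = ↑((uflip F H R)⁻¹)⁻¹ * ((1 : H) ⊗ₜ[F] (↑b : H))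
          * (Algebra.TensorProduct.map (AlgEquiv.refl : H ≃ₐ[F] H).toAlgHom
              (AlgHom.id F H)) ↑R
          * ((↑b : H) ⊗ₜ[F] (1 : H))) ∧
    (∀ x : H, ↑b * x = (AlgEquiv.refl : H ≃ₐ[F] H) x * ↑b) := by
  refine ⟨twistPair_refl_uflip_inv F H R hR.1, ?_, hcentral⟩
  simpa only [inv_inv, coe_uflip, AlgEquiv.refl_toAlgHom, Algebra.TensorProduct.map_id,
    AlgHom.id_apply] using comul_eq_of_balance F H hcentral hcoprod

end
end

section
/- Let (H,R) be a quasitriangular bialgebra with half-balance h, i.e. invertible h ∈ H with h² central, ε(h)=1 and Δ(h) = (h⊗h)·R. Then R·Δ(h)·R⁻¹ = Δ^op(h), R·(h⊗h) = (h⊗h)·R₂₁, and h² is a balance for (H,R), i.e. Δ(h²) = (h²⊗h²)·R₂₁·R. -/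
/-! Flipping `Δ(h) = (h⊗h)R` gives `Δ^op(h) = (h⊗h)R₂₁`; substituting both into
`RΔ(h) = Δ^op(h)R` and cancelling `R` yields `R(h⊗h) = (h⊗h)R₂₁`. Hence
`Δ(h²) = (h⊗h)R(h⊗h)R = (h²⊗h²)R₂₁R`. -/

noncomputable section
open TensorProduct

variable (F : Type*) [CommRing F] (H : Type*) [Ring H] [Bialgebra F H]

section

variable {F H}

theorem τ₂_tmul (a b : H) : τ₂ F H (a ⊗ₜ[F] b) = b ⊗ₜ[F] a := rfl

theorem mul_eq_τ₂_mul_uflip_of_comul_eq_mul {R : (H ⊗[F] H)ˣ} {x : H} {g : H ⊗[F] H}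
    (hRx : ↑R * Δ F H x = Δop F H x * ↑R) (hx : Δ F H x = g * ↑R) :
    ↑R * g = τ₂ F H g * ↑(uflip F H R) := by
  rw [← Units.mul_left_inj R, mul_assoc, ← hx, hRx]
  change τ₂ F H (Δ F H x) * ↑R = _
  rw [hx, map_mul]
  rfl

theorem comul_mul_self_of_comul_eq_mul {R : (H ⊗[F] H)ˣ} {x : H} {g g' : H ⊗[F] H}
    (hRg : ↑R * g = g' * ↑(uflip F H R)) (hx : Δ F H x = g * ↑R) :
    Δ F H (x * x) = g * g' * ↑(uflip F H R) * ↑R := by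
  rw [map_mul, hx, mul_assoc g, ← mul_assoc (↑R : H ⊗[F] H) g, hRg]
  simp only [mul_assoc]

end

/-- for a half-balance `h` (invertible, `h²` central, `ε(h)=1`,
`Δ(h)=(h⊗h)R`) one has `R·Δ(h)·R⁻¹ = Δ^op(h)`, `R·(h⊗h) = (h⊗h)·R₂₁` and `h²`
is a balance: it is central, has counit `1` and `Δ(h²) = (h²⊗h²)·R₂₁·R`. -/
theorem half_balance_properties (R : (H ⊗[F] H)ˣ) (h : Hˣ)
    (hR : IsQuasiTri F H (Δ F H) R)
    (hc : ∀ x : H, (↑h * ↑h : H) * x = x * (↑h * ↑h))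
    (hcounit : ε F H ↑h = 1)
    (hcoprod : Δ F H ↑h = ((↑h : H) ⊗ₜ[F] (↑h : H)) * ↑R) :
    (↑R * Δ F H ↑h * ↑R⁻¹ = Δop F H ↑h) ∧
    (↑R * ((↑h : H) ⊗ₜ[F] (↑h : H)) = ((↑h : H) ⊗ₜ[F] (↑h : H)) * ↑(uflip F H R)) ∧
    (∀ x : H, (↑h * ↑h : H) * x = x * (↑h * ↑h)) ∧
    (ε F H (↑h * ↑h : H) = 1) ∧
    (Δ F H (↑h * ↑h : H)
        = ((↑h * ↑h : H) ⊗ₜ[F] (↑h * ↑h : H)) * ↑(uflip F H R) * ↑R) := by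
  have hRh : ↑R * Δ F H ↑h = Δop F H ↑h * ↑R := hR.1 _
  have hRhh := mul_eq_τ₂_mul_uflip_of_comul_eq_mul hRh hcoprod
  rw [τ₂_tmul] at hRhh
  refine ⟨(Units.mul_inv_eq_iff_eq_mul R).2 hRh, hRhh, hc, ?_, ?_⟩
  · rw [map_mul, hcounit, mul_one]
  · rw [comul_mul_self_of_comul_eq_mul hRhh hcoprod, Algebra.TensorProduct.tmul_mul_tmul]

end
end
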